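/- arXiv:1810.05324 — 6 statements merged into one kernel-verified Lean document; each statement's English description precedes it below -/
import Mathlib

section
/- Let G be a triangle-free simple graph on n vertices and let c be an edge coloring of G such that the total color degree of G is strictly greater than 2mn. Then G contains a rainbow matching of size m+1 under c. -/
/-!
Take a maximum rainbow matching `M` with `k` edges and call a color *fresh* at a vertex `v` if
it lies on an edge from `v` to an unmatched vertex and is not used by `M`. In a triangle-free
graph a vertex has at most one neighbor on each edge of `M`; hence a matched vertex has color
degree at most `2k - 1` plus its number of fresh colors, and an unmatched vertex sees at most
`k` colors on its edges into `V(M)`.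

Exchange arguments against the maximality of `M` give two more facts. The ends of an edge of `M`
cannot carry two distinct fresh colors, so an edge of `M` carries at most two fresh colors
unless one end is a *hub*, with at least three. Edges between unmatched vertices use colors of
`M`, but never the color of an edge of `M` containing a hub. Charging each fresh color at a hub
to the unmatched neighbor it comes from, every unmatched vertex absorbs at most `2k`, so the
total color degree is at most `4k² + 2k(n - 2k) = 2kn`.
-/

variable {V : Type*} {α : Type*}

/-- `M` is a rainbow matching in `G` under the edge coloring `c`: its elements are
edges of `G`, pairwise vertex-disjoint, and receive pairwise distinct colors. -/
def IsRainbowMatching (G : SimpleGraph V) (c : Sym2 V → α) (M : Finset (Sym2 V)) : Prop :=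
  ↑M ⊆ G.edgeSet ∧
  (∀ e ∈ M, ∀ f ∈ M, e ≠ f → ∀ v : V, v ∈ e → v ∉ f) ∧
  ∀ e ∈ M, ∀ f ∈ M, c e = c f → e = f

/-- The color degree of `v`: the number of distinct colors appearing on edges incident to `v`. -/
noncomputable def colorDegree (G : SimpleGraph V) (c : Sym2 V → α) (v : V) : ℕ :=
  (c '' G.incidenceSet v).ncard

/-- The total color degree of `G`: the sum of color degrees over all vertices. -/
noncomputable def totalColorDegree [Fintype V] (G : SimpleGraph V) (c : Sym2 V → α) : ℕ :=
  ∑ v : V, colorDegree G c v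

open Finset
open scoped Classical

noncomputable def matchedVerts (E : Finset (Sym2 V)) : Finset V :=
  E.biUnion Sym2.toFinset

@[simp]
lemma mem_matchedVerts {E : Finset (Sym2 V)} {v : V} :
    v ∈ matchedVerts E ↔ ∃ e ∈ E, v ∈ e := by
  simp [matchedVerts]

lemma matchedVerts_mono {E F : Finset (Sym2 V)} (h : E ⊆ F) : matchedVerts E ⊆ matchedVerts F :=
  biUnion_subset_biUnion_of_subset_left _ h

lemma matchedVerts_insert (e : Sym2 V) (E : Finset (Sym2 V)) :
    matchedVerts (insert e E) = e.toFinset ∪ matchedVerts E :=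
  biUnion_insert

lemma notMem_of_forall_notMem_matchedVerts {E : Finset (Sym2 V)} {e : Sym2 V}
    (he : ∀ v ∈ e, v ∉ matchedVerts E) : e ∉ E := by
  intro heE
  induction e using Sym2.ind with
  | _ x y =>
    exact he x (Sym2.mem_mk_left x y) (mem_matchedVerts.2 ⟨_, heE, Sym2.mem_mk_left x y⟩)

lemma SimpleGraph.CliqueFree.card_filter_adj_toFinset_le_one {G : SimpleGraph V}
    (hG : G.CliqueFree 3) {e : Sym2 V} (he : e ∈ G.edgeSet) (z : V) :
    #(e.toFinset.filter (G.Adj z)) ≤ 1 := by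
  refine card_le_one.2 fun a ha b hb => ?_
  simp only [mem_filter, Sym2.mem_toFinset] at ha hb
  by_contra hab
  rw [(Sym2.mem_and_mem_iff hab).1 ⟨ha.1, hb.1⟩, SimpleGraph.mem_edgeSet] at he
  exact hG {z, a, b} (SimpleGraph.is3Clique_triple_iff.2 ⟨ha.2, hb.2, he⟩)

lemma SimpleGraph.CliqueFree.card_filter_adj_matchedVerts_le {G : SimpleGraph V}
    (hG : G.CliqueFree 3) {E : Finset (Sym2 V)} (hE : ↑E ⊆ G.edgeSet) (z : V) :
    #((matchedVerts E).filter (G.Adj z)) ≤ #E := by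
  rw [matchedVerts, filter_biUnion]
  simpa using card_biUnion_le_card_mul E _ 1
    fun e he => hG.card_filter_adj_toFinset_le_one (hE he) z

section RainbowMatching

variable {G : SimpleGraph V} {c : Sym2 V → α} {M : Finset (Sym2 V)}

namespace IsRainbowMatching

lemma subset (hM : IsRainbowMatching G c M) {N : Finset (Sym2 V)} (hNM : N ⊆ M) :
    IsRainbowMatching G c N :=
  ⟨(coe_subset.2 hNM).trans hM.1, fun e he f hf => hM.2.1 e (hNM he) f (hNM hf),
    fun e he f hf => hM.2.2 e (hNM he) f (hNM hf)⟩

lemma exists_subset_card_eq (hM : IsRainbowMatching G c M) {m : ℕ} (hm : m ≤ #M) :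
    ∃ N, IsRainbowMatching G c N ∧ #N = m := by
  obtain ⟨N, hNM, hN⟩ := Finset.exists_subset_card_eq hm
  exact ⟨N, hM.subset hNM, hN⟩

lemma insert (hM : IsRainbowMatching G c M) {e : Sym2 V} (he : e ∈ G.edgeSet)
    (hd : ∀ v ∈ e, v ∉ matchedVerts M) (hc : c e ∉ M.image c) :
    IsRainbowMatching G c (insert e M) := by
  obtain ⟨hE, hdisj, hinj⟩ := hM
  simp only [mem_matchedVerts, not_exists, not_and] at hd
  simp only [mem_image, not_exists, not_and] at hc
  refine ⟨by simpa [Set.insert_subset_iff] using ⟨he, hE⟩, ?_, ?_⟩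
  · simp only [mem_insert, forall_eq_or_imp]
    refine ⟨⟨fun h => absurd rfl h, fun f hf _ v hv => hd v hv f hf⟩,
      fun f hf => ⟨fun _ v hv hve => hd v hve f hf hv, hdisj f hf⟩⟩
  · simp only [mem_insert, forall_eq_or_imp]
    exact ⟨⟨fun _ => trivial, fun f hf h => (hc f hf h.symm).elim⟩,
      fun f hf => ⟨fun h => (hc f hf h).elim, hinj f hf⟩⟩

lemma notMem_matchedVerts_erase (hM : IsRainbowMatching G c M) {f : Sym2 V} (hf : f ∈ M)
    {v : V} (hv : v ∈ f) : v ∉ matchedVerts (M.erase f) := by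
  simp only [mem_matchedVerts, mem_erase, not_exists, not_and]
  exact fun g ⟨hgf, hg⟩ => hM.2.1 f hf g hg (Ne.symm hgf) v hv

lemma card_image (hM : IsRainbowMatching G c M) : #(M.image c) = #M :=
  card_image_of_injOn fun e he f hf => hM.2.2 e he f hf

lemma pairwiseDisjoint_toFinset (hM : IsRainbowMatching G c M) :
    (↑M : Set (Sym2 V)).PairwiseDisjoint Sym2.toFinset :=
  fun e he f hf hef => disjoint_left.2 fun v hve hvf =>
    hM.2.1 e he f hf hef v (Sym2.mem_toFinset.1 hve) (Sym2.mem_toFinset.1 hvf)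

lemma card_toFinset (hM : IsRainbowMatching G c M) {e : Sym2 V} (he : e ∈ M) : #e.toFinset = 2 :=
  Sym2.card_toFinset_of_not_isDiag e (G.not_isDiag_of_mem_edgeSet (hM.1 he))

lemma card_matchedVerts (hM : IsRainbowMatching G c M) : #(matchedVerts M) = 2 * #M := by
  rw [matchedVerts, card_biUnion hM.pairwiseDisjoint_toFinset,
    sum_congr rfl fun e => hM.card_toFinset, sum_const, smul_eq_mul, mul_comm]

end IsRainbowMatching

def IsMaximumRainbowMatching (G : SimpleGraph V) (c : Sym2 V → α) (M : Finset (Sym2 V)) : Prop :=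
  IsRainbowMatching G c M ∧ ∀ N, IsRainbowMatching G c N → #N ≤ #M

lemma exists_isMaximumRainbowMatching [Finite V] (G : SimpleGraph V) (c : Sym2 V → α) :
    ∃ M, IsMaximumRainbowMatching G c M := by
  have := Fintype.ofFinite V
  obtain ⟨M, hM, hmax⟩ := (univ.filter (IsRainbowMatching G c)).exists_max_image card
    ⟨∅, by simp [IsRainbowMatching]⟩
  exact ⟨M, (mem_filter.1 hM).2, fun N hN => hmax N (by simpa using hN)⟩

namespace IsMaximumRainbowMatching

lemma mem_image_of_forall_notMem (hM : IsMaximumRainbowMatching G c M) {e : Sym2 V}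
    (he : e ∈ G.edgeSet) (hd : ∀ v ∈ e, v ∉ matchedVerts M) : c e ∈ M.image c := by
  by_contra hc
  have := hM.2 _ (hM.1.insert he hd hc)
  rw [card_insert_of_notMem (notMem_of_forall_notMem_matchedVerts hd)] at this
  omega

lemma color_eq_of_exchange (hM : IsMaximumRainbowMatching G c M) {f e₁ e₂ : Sym2 V}
    (hf : f ∈ M) (he₁ : e₁ ∈ G.edgeSet) (he₂ : e₂ ∈ G.edgeSet)
    (hd₁ : ∀ v ∈ e₁, v ∉ matchedVerts (M.erase f))
    (hd₂ : ∀ v ∈ e₂, v ∉ matchedVerts (M.erase f))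
    (hd : ∀ v ∈ e₁, v ∉ e₂) (hc₁ : c e₁ ∉ (M.erase f).image c)
    (hc₂ : c e₂ ∉ (M.erase f).image c) : c e₁ = c e₂ := by
  by_contra hc
  have hN₂ := (hM.1.subset (erase_subset f M)).insert he₂ hd₂ hc₂
  have hd₁' : ∀ v ∈ e₁, v ∉ matchedVerts (insert e₂ (M.erase f)) := fun v hv => by
    rw [matchedVerts_insert, mem_union, not_or, Sym2.mem_toFinset]
    exact ⟨hd v hv, hd₁ v hv⟩
  have hN := hN₂.insert he₁ hd₁' <| by
    rw [image_insert, mem_insert, not_or]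
    exact ⟨hc, hc₁⟩
  have := hM.2 _ hN
  rw [card_insert_of_notMem (notMem_of_forall_notMem_matchedVerts hd₁'),
    card_insert_of_notMem (notMem_of_forall_notMem_matchedVerts hd₂),
    card_erase_of_mem hf] at this
  have := card_pos.2 ⟨f, hf⟩
  omega

end IsMaximumRainbowMatching

end RainbowMatching

section Colors

variable {G : SimpleGraph V} {c : Sym2 V → α}

noncomputable def colorsTo (G : SimpleGraph V) (c : Sym2 V → α) (v : V) (S : Finset V) :
    Finset α :=
  (S.filter (G.Adj v)).image fun w => c s(v, w)

lemma mem_colorsTo {v : V} {S : Finset V} {γ : α} :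
    γ ∈ colorsTo G c v S ↔ ∃ w ∈ S, G.Adj v w ∧ c s(v, w) = γ := by
  simp [colorsTo, and_assoc]

lemma card_colorsTo_le (v : V) (S : Finset V) : #(colorsTo G c v S) ≤ #(S.filter (G.Adj v)) :=
  card_image_le

lemma colorsTo_union (v : V) (S T : Finset V) :
    colorsTo G c v (S ∪ T) = colorsTo G c v S ∪ colorsTo G c v T := by
  rw [colorsTo, filter_union, image_union, colorsTo, colorsTo]

lemma colorDegree_eq_card_colorsTo [Fintype V] (v : V) :
    colorDegree G c v = #(colorsTo G c v univ) := by
  rw [colorDegree, ← Set.ncard_coe_finset]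
  congr 1
  ext γ
  simp only [Set.mem_image, SimpleGraph.incidenceSet, Set.mem_ofPred_eq, mem_coe,
    mem_colorsTo, mem_univ, true_and]
  constructor
  · rintro ⟨e, ⟨he, hve⟩, rfl⟩
    obtain ⟨w, rfl⟩ := Sym2.mem_iff_exists.1 hve
    exact ⟨w, he, rfl⟩
  · rintro ⟨w, hvw, rfl⟩
    exact ⟨s(v, w), ⟨hvw, Sym2.mem_mk_left v w⟩, rfl⟩

end Colors

section Counting

variable [Fintype V] {G : SimpleGraph V} {c : Sym2 V → α} {M : Finset (Sym2 V)}

noncomputable def freshColors (G : SimpleGraph V) (c : Sym2 V → α) (M : Finset (Sym2 V))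
    (v : V) : Finset α :=
  colorsTo G c v (matchedVerts M)ᶜ \ M.image c

lemma mem_freshColors {v : V} {γ : α} : γ ∈ freshColors G c M v ↔
    (∃ w ∉ matchedVerts M, G.Adj v w ∧ c s(v, w) = γ) ∧ γ ∉ M.image c := by
  simp only [freshColors, mem_sdiff, mem_colorsTo, mem_compl]

noncomputable def hubs (G : SimpleGraph V) (c : Sym2 V → α) (M : Finset (Sym2 V)) : Finset V :=
  (matchedVerts M).filter fun v => 3 ≤ #(freshColors G c M v)

lemma IsRainbowMatching.card_colorsTo_add_one_le (hG : G.CliqueFree 3)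
    (hM : IsRainbowMatching G c M) {v : V} (hv : v ∈ matchedVerts M) :
    #(colorsTo G c v univ) + 1 ≤ 2 * #M + #(freshColors G c M v) := by
  obtain ⟨f, hf, hvf⟩ := mem_matchedVerts.1 hv
  have hsub : colorsTo G c v univ ⊆
      M.image c ∪ freshColors G c M v ∪ colorsTo G c v (matchedVerts (M.erase f)) := by
    intro γ hγ
    obtain ⟨w, -, hvw, rfl⟩ := mem_colorsTo.1 hγ
    by_cases hC : c s(v, w) ∈ M.image c
    · simp [hC]
    by_cases hE : w ∈ matchedVerts (M.erase f)
    · exact mem_union_right _ (mem_colorsTo.2 ⟨w, hE, hvw, rfl⟩)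
    refine mem_union_left _ (mem_union_right _ ?_)
    refine mem_freshColors.2 ⟨⟨w, fun hw => ?_, hvw, rfl⟩, hC⟩
    obtain ⟨g, hg, hwg⟩ := mem_matchedVerts.1 hw
    obtain rfl : g = f := by
      by_contra hgf
      exact hE (mem_matchedVerts.2 ⟨g, mem_erase.2 ⟨hgf, hg⟩, hwg⟩)
    rw [(Sym2.mem_and_mem_iff hvw.ne).1 ⟨hvf, hwg⟩] at hg
    exact hC (mem_image_of_mem c hg)
  have hErase : #(colorsTo G c v (matchedVerts (M.erase f))) ≤ #(M.erase f) :=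
    (card_colorsTo_le _ _).trans
      (hG.card_filter_adj_matchedVerts_le ((coe_subset.2 (erase_subset f M)).trans hM.1) v)
  have := card_le_card hsub
  have := card_union_le (M.image c ∪ freshColors G c M v)
    (colorsTo G c v (matchedVerts (M.erase f)))
  have := card_union_le (M.image c) (freshColors G c M v)
  have := card_erase_add_one hf
  have := hM.card_image
  omega

lemma sum_card_freshColors_hubs_le :
    ∑ v ∈ hubs G c M, #(freshColors G c M v) ≤
      ∑ z ∈ (matchedVerts M)ᶜ, #((hubs G c M).filter (G.Adj z)) := by
  calc ∑ v ∈ hubs G c M, #(freshColors G c M v)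
      ≤ ∑ v ∈ hubs G c M, #((matchedVerts M)ᶜ.filter (G.Adj v)) :=
        sum_le_sum fun v _ => (card_le_card sdiff_subset).trans (card_colorsTo_le _ _)
    _ = ∑ z ∈ (matchedVerts M)ᶜ, #((hubs G c M).filter (G.Adj z)) :=
        (sum_card_bipartiteAbove_eq_sum_card_bipartiteBelow G.Adj).trans
          (sum_congr rfl fun z _ => congrArg card (filter_congr fun v _ => G.adj_comm v z))

namespace IsMaximumRainbowMatching

lemma eq_of_mem_freshColors (hG : G.CliqueFree 3) (hM : IsMaximumRainbowMatching G c M)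
    {x y : V} (hxy : s(x, y) ∈ M) {γ δ : α} (hγ : γ ∈ freshColors G c M x)
    (hδ : δ ∈ freshColors G c M y) : γ = δ := by
  obtain ⟨⟨wx, hwx, hxwx, rfl⟩, hγ⟩ := mem_freshColors.1 hγ
  obtain ⟨⟨wy, hwy, hywy, rfl⟩, hδ⟩ := mem_freshColors.1 hδ
  have hadj : G.Adj x y := hM.1.1 hxy
  have hx : x ∈ matchedVerts M := mem_matchedVerts.2 ⟨_, hxy, Sym2.mem_mk_left x y⟩
  have hw : wx ≠ wy := by
    rintro rfl
    exact hG {x, y, wx} (SimpleGraph.is3Clique_triple_iff.2 ⟨hadj, hxwx, hywy⟩)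
  have hsub := matchedVerts_mono (erase_subset s(x, y) M)
  have himg := image_subset_image (f := c) (erase_subset s(x, y) M)
  refine hM.color_eq_of_exchange hxy hxwx hywy ?_ ?_ ?_ (fun h => hγ (himg h))
    (fun h => hδ (himg h))
  · simp only [Sym2.mem_iff, forall_eq_or_imp, forall_eq]
    exact ⟨hM.1.notMem_matchedVerts_erase hxy (Sym2.mem_mk_left x y), fun h => hwx (hsub h)⟩
  · simp only [Sym2.mem_iff, forall_eq_or_imp, forall_eq]
    exact ⟨hM.1.notMem_matchedVerts_erase hxy (Sym2.mem_mk_right x y), fun h => hwy (hsub h)⟩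
  · simp only [Sym2.mem_iff, forall_eq_or_imp, forall_eq, not_or]
    exact ⟨⟨hadj.ne, fun h => hwy (h ▸ hx)⟩,
      ⟨fun h => hwx (h ▸ mem_matchedVerts.2 ⟨_, hxy, Sym2.mem_mk_right x y⟩), hw⟩⟩

lemma card_freshColors_le_one (hG : G.CliqueFree 3) (hM : IsMaximumRainbowMatching G c M)
    {x y : V} (hxy : s(x, y) ∈ M) (hy : (freshColors G c M y).Nonempty) :
    #(freshColors G c M x) ≤ 1 := by
  obtain ⟨δ, hδ⟩ := hy
  exact card_le_one.2 fun γ hγ γ' hγ' =>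
    (hM.eq_of_mem_freshColors hG hxy hγ hδ).trans (hM.eq_of_mem_freshColors hG hxy hγ' hδ).symm

lemma sum_card_freshColors_filter_lt_le (hG : G.CliqueFree 3)
    (hM : IsMaximumRainbowMatching G c M) {f : Sym2 V} (hf : f ∈ M) :
    ∑ v ∈ f.toFinset.filter (fun v => ¬3 ≤ #(freshColors G c M v)),
      #(freshColors G c M v) ≤ 2 := by
  induction f using Sym2.ind with
  | _ x y =>
  rw [sum_filter, Sym2.toFinset_mk_eq, sum_pair (hM.1.1 hf).ne]
  dsimp only
  rcases Nat.eq_zero_or_pos #(freshColors G c M x) with hx | hx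
  · split_ifs <;> omega
  rcases Nat.eq_zero_or_pos #(freshColors G c M y) with hy | hy
  · split_ifs <;> omega
  have := hM.card_freshColors_le_one hG hf (card_pos.1 hy)
  have := hM.card_freshColors_le_one hG (Sym2.eq_swap ▸ hf) (card_pos.1 hx)
  split_ifs <;> omega

lemma sum_card_freshColors_le (hG : G.CliqueFree 3) (hM : IsMaximumRainbowMatching G c M) :
    ∑ v ∈ matchedVerts M, #(freshColors G c M v) ≤
      2 * #M + ∑ v ∈ hubs G c M, #(freshColors G c M v) := by
  rw [hubs, add_comm,
    ← sum_filter_add_sum_filter_not (matchedVerts M) (fun v => 3 ≤ #(freshColors G c M v))]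
  gcongr
  rw [matchedVerts, filter_biUnion,
    sum_biUnion (hM.1.pairwiseDisjoint_toFinset.mono fun f => filter_subset _ _)]
  calc _ ≤ ∑ _ ∈ M, 2 := sum_le_sum fun f hf => hM.sum_card_freshColors_filter_lt_le hG hf
    _ = 2 * #M := by rw [sum_const, smul_eq_mul, mul_comm]

lemma color_ne_of_three_le_card_freshColors (hM : IsMaximumRainbowMatching G c M) {f : Sym2 V}
    (hf : f ∈ M) {v : V} (hvf : v ∈ f) (hv : 3 ≤ #(freshColors G c M v)) {z t : V}
    (hz : z ∉ matchedVerts M) (ht : t ∉ matchedVerts M) (hzt : G.Adj z t) :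
    c s(z, t) ≠ c f := by
  intro hc
  -- three fresh colors at `v` leave one on an edge `vw` with `w ∉ {z, t}`
  obtain ⟨γ, hγ, hγzt⟩ := exists_mem_notMem_of_card_lt_card
    ((card_le_two : #{c s(v, z), c s(v, t)} ≤ 2).trans_lt hv)
  obtain ⟨⟨w, hw, hvw, rfl⟩, hγ⟩ := mem_freshColors.1 hγ
  simp only [mem_insert, mem_singleton, not_or] at hγzt
  have hv' : v ∈ matchedVerts M := mem_matchedVerts.2 ⟨f, hf, hvf⟩
  have hsub := matchedVerts_mono (erase_subset f M)
  have hcf : c s(z, t) ∉ (M.erase f).image c := by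
    rw [hc, mem_image]
    rintro ⟨g, hg, hgf⟩
    exact (mem_erase.1 hg).1 (hM.1.2.2 g (mem_erase.1 hg).2 f hf hgf)
  have heq := hM.color_eq_of_exchange hf hzt hvw ?_ ?_ ?_ hcf
    (fun h => hγ (image_subset_image (erase_subset f M) h))
  · exact hγ (heq ▸ hc ▸ mem_image_of_mem c hf)
  · simp only [Sym2.mem_iff, forall_eq_or_imp, forall_eq]
    exact ⟨fun h => hz (hsub h), fun h => ht (hsub h)⟩
  · simp only [Sym2.mem_iff, forall_eq_or_imp, forall_eq]
    exact ⟨hM.1.notMem_matchedVerts_erase hf hvf, fun h => hw (hsub h)⟩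
  · simp only [Sym2.mem_iff, forall_eq_or_imp, forall_eq, not_or]
    exact ⟨⟨fun h => hz (h ▸ hv'), fun h => hγzt.1 (h ▸ rfl)⟩,
      ⟨fun h => ht (h ▸ hv'), fun h => hγzt.2 (h ▸ rfl)⟩⟩

lemma card_colorsTo_add_card_filter_hubs_le (hG : G.CliqueFree 3)
    (hM : IsMaximumRainbowMatching G c M) {z : V} (hz : z ∉ matchedVerts M) :
    #(colorsTo G c z univ) + #((hubs G c M).filter (G.Adj z)) ≤ 2 * #M := by
  set H := M.filter fun f => ∃ v ∈ f, v ∈ hubs G c M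
  have hout : colorsTo G c z (matchedVerts M)ᶜ ⊆ M.image c \ H.image c := by
    intro γ hγ
    obtain ⟨t, ht, hzt, rfl⟩ := mem_colorsTo.1 hγ
    rw [mem_compl] at ht
    refine mem_sdiff.2 ⟨hM.mem_image_of_forall_notMem hzt ?_, ?_⟩
    · simp only [Sym2.mem_iff, forall_eq_or_imp, forall_eq]
      exact ⟨hz, ht⟩
    · rw [mem_image]
      rintro ⟨f, hf, hcf⟩
      obtain ⟨hfM, v, hvf, hv⟩ := mem_filter.1 hf
      exact hM.color_ne_of_three_le_card_freshColors hfM hvf (mem_filter.1 hv).2 hz ht hzt hcf.symm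
  have hhubs : hubs G c M ⊆ matchedVerts H := fun v hv => by
    obtain ⟨f, hf, hvf⟩ := mem_matchedVerts.1 (mem_filter.1 hv).1
    exact mem_matchedVerts.2 ⟨f, mem_filter.2 ⟨hf, v, hvf, hv⟩, hvf⟩
  have hin : #(colorsTo G c z (matchedVerts M)) ≤ #M :=
    (card_colorsTo_le _ _).trans (hG.card_filter_adj_matchedVerts_le hM.1.1 z)
  have hnear : #((hubs G c M).filter (G.Adj z)) ≤ #H :=
    (card_le_card (filter_subset_filter _ hhubs)).trans
      (hG.card_filter_adj_matchedVerts_le ((coe_subset.2 (filter_subset _ M)).trans hM.1.1) z)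
  have hsplit : #(colorsTo G c z univ) ≤
      #(colorsTo G c z (matchedVerts M)) + #(colorsTo G c z (matchedVerts M)ᶜ) := by
    rw [← union_compl (matchedVerts M), colorsTo_union]
    exact card_union_le _ _
  have := card_le_card hout
  have := card_sdiff_add_card_eq_card (image_subset_image (f := c) (filter_subset _ M) :
    H.image c ⊆ M.image c)
  have : #(H.image c) = #H := (hM.1.subset (filter_subset _ M)).card_image
  have := hM.1.card_image
  omega

lemma totalColorDegree_le (hG : G.CliqueFree 3) (hM : IsMaximumRainbowMatching G c M) :
    totalColorDegree G c ≤ 2 * #M * Fintype.card V := by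
  set VM := matchedVerts M
  have hin : ∑ v ∈ VM, (#(colorsTo G c v univ) + 1) ≤
      ∑ v ∈ VM, (2 * #M + #(freshColors G c M v)) :=
    sum_le_sum fun v hv => hM.1.card_colorsTo_add_one_le hG hv
  have hout : ∑ z ∈ VMᶜ, (#(colorsTo G c z univ) + #((hubs G c M).filter (G.Adj z))) ≤
      ∑ _ ∈ VMᶜ, 2 * #M :=
    sum_le_sum fun z hz => hM.card_colorsTo_add_card_filter_hubs_le hG (mem_compl.1 hz)
  have hfresh := hM.sum_card_freshColors_le hG
  have hhubs := sum_card_freshColors_hubs_le (G := G) (c := c) (M := M)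
  have hcard : #VM + #VMᶜ = Fintype.card V := card_add_card_compl VM
  have hVM : #VM = 2 * #M := hM.1.card_matchedVerts
  simp only [sum_add_distrib, sum_const, smul_eq_mul, hVM] at hin hout
  rw [totalColorDegree, sum_congr rfl fun v _ => colorDegree_eq_card_colorsTo v,
    ← sum_add_sum_compl VM, ← hcard, hVM]
  linarith

end IsMaximumRainbowMatching

end Counting

/-- If `G` is a triangle-free graph on `n` vertices and `c` is an edge coloring with
total color degree strictly greater than `2 * m * n`, then `G` contains a rainbow
matching of size `m + 1`. -/
theorem triangle_free_rainbow_matching [Fintype V] (G : SimpleGraph V)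
    (hG : G.CliqueFree 3) (c : Sym2 V → α) (m : ℕ)
    (h : 2 * m * Fintype.card V < totalColorDegree G c) :
    ∃ M : Finset (Sym2 V), IsRainbowMatching G c M ∧ M.card = m + 1 := by
  obtain ⟨M, hM⟩ := exists_isMaximumRainbowMatching G c
  refine hM.1.exists_subset_card_eq ?_
  by_contra! hlt
  have : 2 * #M * Fintype.card V ≤ 2 * m * Fintype.card V := by gcongr; omega
  have := hM.totalColorDegree_le hG
  omega
end

section
/- Let G be a simple graph on n vertices with n ≥ 8m, and let c be a proper edge coloring of G such that the total color degree of G is at least 2mn. Then G contains a rainbow matching of size m under c. -/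
variable {V : Type*} {α : Type*}

/-- `c` is a proper edge coloring of `G`: distinct edges sharing a vertex get different colors. -/
def IsProperEdgeColoring (G : SimpleGraph V) (c : Sym2 V → α) : Prop :=
  ∀ e ∈ G.edgeSet, ∀ f ∈ G.edgeSet, e ≠ f → (∃ v : V, v ∈ e ∧ v ∈ f) → c e ≠ c f



open Finset in
private lemma rainbow_subset {G : SimpleGraph V} {c : Sym2 V → α} {M N : Finset (Sym2 V)}
    (h : IsRainbowMatching G c M) (hN : N ⊆ M) : IsRainbowMatching G c N :=
  ⟨fun e he => h.1 (hN (by exact_mod_cast he)),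
   fun e he f hf => h.2.1 e (hN he) f (hN hf),
   fun e he f hf => h.2.2 e (hN he) f (hN hf)⟩

open Finset in
private lemma rainbow_ext {G : SimpleGraph V} {c : Sym2 V → α} {M : Finset (Sym2 V)}
    [DecidableEq V]
    (hM : IsRainbowMatching G c M) (S F : Finset (Sym2 V)) (hS : S ⊆ M)
    (hFE : ∀ f ∈ F, f ∈ G.edgeSet)
    (hFdisj : ∀ f ∈ F, ∀ g ∈ F, f ≠ g → ∀ v : V, v ∈ f → v ∉ g)
    (hFcol : ∀ f ∈ F, ∀ g ∈ F, c f = c g → f = g)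
    (hFM : ∀ f ∈ F, ∀ e ∈ M, e ∉ S → ∀ v : V, v ∈ f → v ∉ e)
    (hFMcol : ∀ f ∈ F, ∀ e ∈ M, e ∉ S → c f ≠ c e) :
    IsRainbowMatching G c ((M \ S) ∪ F) ∧
      ((M \ S) ∪ F).card = M.card - S.card + F.card := by
  have hdisjMF : Disjoint (M \ S) F := by
    rw [Finset.disjoint_right]
    intro f hfF hfMS
    rw [Finset.mem_sdiff] at hfMS
    have hv : f.out.1 ∈ f := f.out_fst_mem
    exact hFM f hfF f hfMS.1 hfMS.2 f.out.1 hv hv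
  have hmem : ∀ e, e ∈ (M \ S) ∪ F → (e ∈ M ∧ e ∉ S) ∨ e ∈ F := by
    intro e he
    rcases Finset.mem_union.1 he with h' | h'
    · exact Or.inl (Finset.mem_sdiff.1 h')
    · exact Or.inr h'
  refine ⟨⟨?_, ?_, ?_⟩, ?_⟩
  · intro e he
    rcases hmem e (by exact_mod_cast he) with h' | h'
    · exact hM.1 (by exact_mod_cast h'.1)
    · exact hFE e h'
  · intro e he f hf hne v hv
    rcases hmem e he with he' | he' <;> rcases hmem f hf with hf' | hf'
    · exact hM.2.1 e he'.1 f hf'.1 hne v hv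
    · intro hvf; exact hFM f hf' e he'.1 he'.2 v hvf hv
    · exact hFM e he' f hf'.1 hf'.2 v hv
    · exact hFdisj e he' f hf' hne v hv
  · intro e he f hf hcf
    rcases hmem e he with he' | he' <;> rcases hmem f hf with hf' | hf'
    · exact hM.2.2 e he'.1 f hf'.1 hcf
    · exact absurd hcf.symm (hFMcol f hf' e he'.1 he'.2)
    · exact absurd hcf (hFMcol e he' f hf'.1 hf'.2)
    · exact hFcol e he' f hf' hcf
  · rw [Finset.card_union_of_disjoint hdisjMF, Finset.card_sdiff_of_subset hS]

open Finset in
private lemma main_bound [Fintype V] (G : SimpleGraph V) (c : Sym2 V → α)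
    (hc : IsProperEdgeColoring G c) (M : Finset (Sym2 V))
    (hM : IsRainbowMatching G c M)
    (hmax : ∀ N : Finset (Sym2 V), IsRainbowMatching G c N → N.card ≤ M.card)
    (hn8 : 8 * (M.card + 1) ≤ Fintype.card V) :
    totalColorDegree G c < 2 * (M.card + 1) * Fintype.card V := by
  classical
  set n := Fintype.card V with hn
  set k := M.card with hk
  have hedgeM : ∀ e ∈ M, e ∈ G.edgeSet := fun e he => hM.1 he
  have hMdisj : ∀ e ∈ M, ∀ f ∈ M, e ≠ f → ∀ v : V, v ∈ e → v ∉ f := hM.2.1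
  have hcinj : ∀ e ∈ M, ∀ f ∈ M, c e = c f → e = f := hM.2.2
  set U : Finset V := univ.filter (fun v => ∃ e ∈ M, v ∈ e) with hU
  have hUmem : ∀ v : V, v ∈ U ↔ ∃ e ∈ M, v ∈ e := by
    intro v; rw [hU]; simp
  set C : Finset α := M.image c with hC
  have hCmem : ∀ a : α, a ∈ C ↔ ∃ e ∈ M, c e = a := by
    intro a; rw [hC]; simp
  set NW : V → Finset V := fun u =>
    univ.filter (fun x => G.Adj u x ∧ x ∉ U ∧ c s(u, x) ∉ C) with hNW
  have hNWmem : ∀ u x : V, x ∈ NW u ↔ G.Adj u x ∧ x ∉ U ∧ c s(u, x) ∉ C := by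
    intro u x; rw [hNW]; simp
  set t : V → ℕ := fun u => (NW u).card with ht
  set p : Sym2 V → V × V := fun e => if t e.out.1 < t e.out.2 then e.out.swap else e.out with hp
  have hpmk : ∀ e : Sym2 V, s((p e).1, (p e).2) = e := by
    intro e
    rw [hp]
    dsimp only
    split
    · rw [Prod.fst_swap, Prod.snd_swap, Sym2.eq_swap]; simp [Sym2.mk]
    · simp [Sym2.mk]
  have hpt : ∀ e : Sym2 V, t (p e).2 ≤ t (p e).1 := by
    intro e
    rw [hp]
    dsimp only
    split
    · simp only [Prod.fst_swap, Prod.snd_swap]; omega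
    · omega
  have hpne : ∀ e ∈ M, (p e).1 ≠ (p e).2 := by
    intro e he
    have hd : ¬ e.IsDiag := G.not_isDiag_of_mem_edgeSet (hedgeM e he)
    rw [← hpmk e] at hd
    simpa [Sym2.mk_isDiag_iff] using hd
  have hpadj : ∀ e ∈ M, G.Adj (p e).1 (p e).2 := by
    intro e he
    have := hedgeM e he
    rw [← hpmk e] at this
    exact G.mem_edgeSet.1 this
  have hpmem : ∀ e ∈ M, (p e).1 ∈ e ∧ (p e).2 ∈ e := by
    intro e _
    rw [hp]
    dsimp only
    split
    · exact ⟨Sym2.out_snd_mem e, Sym2.out_fst_mem e⟩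
    · exact ⟨Sym2.out_fst_mem e, Sym2.out_snd_mem e⟩
  have hpU : ∀ e ∈ M, (p e).1 ∈ U ∧ (p e).2 ∈ U := by
    intro e he; exact ⟨(hUmem _).2 ⟨e, he, (hpmem e he).1⟩, (hUmem _).2 ⟨e, he, (hpmem e he).2⟩⟩
  have hce : ∀ e ∈ M, c s((p e).1, (p e).2) = c e := fun e _ => by rw [hpmk e]
  -- properness at a vertex
  have hproper : ∀ u x y : V, G.Adj u x → G.Adj u y → x ≠ y → c s(u, x) ≠ c s(u, y) := by
    intro u x y hux huy hxy
    refine hc _ (G.mem_edgeSet.2 hux) _ (G.mem_edgeSet.2 huy) ?_ ⟨u, ?_, ?_⟩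
    · intro hEq
      rw [Sym2.congr_right] at hEq
      exact hxy hEq
    · exact Sym2.mem_mk_left _ _
    · exact Sym2.mem_mk_left _ _
  -- vertices not in U are in no matched edge
  have hnotU : ∀ v : V, v ∉ U → ∀ e ∈ M, v ∉ e := by
    intro v hv e he hve; exact hv ((hUmem v).2 ⟨e, he, hve⟩)
  -- the generic extension contradiction
  have hext : ∀ S F : Finset (Sym2 V), S ⊆ M → F.card = S.card + 1 →
      (∀ f ∈ F, f ∈ G.edgeSet) →
      (∀ f ∈ F, ∀ g ∈ F, f ≠ g → ∀ v : V, v ∈ f → v ∉ g) →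
      (∀ f ∈ F, ∀ g ∈ F, c f = c g → f = g) →
      (∀ f ∈ F, ∀ e ∈ M, e ∉ S → ∀ v : V, v ∈ f → v ∉ e) →
      (∀ f ∈ F, ∀ e ∈ M, e ∉ S → c f ≠ c e) → False := by
    intro S F hS hFcard h1 h2 h3 h4 h5
    obtain ⟨hrm, hcard⟩ := rainbow_ext hM S F hS h1 h2 h3 h4 h5
    have := hmax _ hrm
    rw [hcard, hFcard] at this
    have hSk : S.card ≤ k := Finset.card_le_card hS
    omega
  have hpick : ∀ u : V, ∀ (A : Finset V) (B : Finset α), A.card + B.card < t u →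
      ∃ x, x ∈ NW u ∧ x ∉ A ∧ c s(u, x) ∉ B := by
    intro u A B hlt
    by_contra hcon
    push_neg at hcon
    have hsplit := Finset.card_filter_add_card_filter_not
      (s := NW u) (p := fun x => x ∈ A)
    have h1 : ((NW u).filter (fun x => x ∈ A)).card ≤ A.card :=
      Finset.card_le_card (fun x hx => (Finset.mem_filter.1 hx).2)
    have h2 : ((NW u).filter (fun x => ¬ x ∈ A)).card ≤ B.card := by
      apply Finset.card_le_card_of_injOn (fun x => c s(u, x))
      · intro x hx
        obtain ⟨hxNW, hxA⟩ := Finset.mem_filter.1 hx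
        exact hcon x hxNW hxA
      · intro x hx y hy hxy
        by_contra hne
        obtain ⟨hxNW, _⟩ := Finset.mem_filter.1 hx
        obtain ⟨hyNW, _⟩ := Finset.mem_filter.1 hy
        exact hproper u x y ((hNWmem u x).1 hxNW).1 ((hNWmem u y).1 hyNW).1 hne hxy
    simp only [ht] at hlt
    omega
  have hext1 : ∀ f : Sym2 V, f ∈ G.edgeSet → (∀ e ∈ M, ∀ v : V, v ∈ f → v ∉ e) →
      (∀ e ∈ M, c f ≠ c e) → False := by
    intro f hfE hfM hfc
    refine hext ∅ {f} (Finset.empty_subset M) (by simp) (by simpa) ?_ ?_ ?_ ?_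
    · intro f1 h1 f2 h2 hne
      simp only [Finset.mem_singleton] at h1 h2
      exact absurd (h1.trans h2.symm) hne
    · intro f1 h1 f2 h2 _
      simp only [Finset.mem_singleton] at h1 h2
      rw [h1, h2]
    · intro f1 h1 e he _
      simp only [Finset.mem_singleton] at h1
      subst h1; exact hfM e he
    · intro f1 h1 e he _
      simp only [Finset.mem_singleton] at h1
      subst h1; exact hfc e he
  have hext2 : ∀ e₀ ∈ M, ∀ f1 f2 : Sym2 V, f1 ∈ G.edgeSet → f2 ∈ G.edgeSet →
      (∀ v : V, v ∈ f1 → v ∉ f2) → c f1 ≠ c f2 →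
      (∀ e ∈ M, e ≠ e₀ → ∀ v : V, v ∈ f1 → v ∉ e) →
      (∀ e ∈ M, e ≠ e₀ → ∀ v : V, v ∈ f2 → v ∉ e) →
      (∀ e ∈ M, e ≠ e₀ → c f1 ≠ c e) →
      (∀ e ∈ M, e ≠ e₀ → c f2 ≠ c e) → False := by
    intro e₀ he₀ f1 f2 hE1 hE2 hdisj hcol h1 h2 h3 h4
    have hne : f1 ≠ f2 := fun h => hcol (by rw [h])
    refine hext {e₀} {f1, f2} (by simpa) ?_ ?_ ?_ ?_ ?_ ?_
    · rw [Finset.card_insert_of_notMem (by simpa using hne)]; simp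
    · intro f hf
      rcases Finset.mem_insert.1 hf with rfl | hf
      · exact hE1
      · rw [Finset.mem_singleton.1 hf]; exact hE2
    · intro f hf g hg hfg v hvf
      have hf' : f = f1 ∨ f = f2 := by simpa using hf
      have hg' : g = f1 ∨ g = f2 := by simpa using hg
      rcases hf' with rfl | rfl <;> rcases hg' with rfl | rfl
      · exact absurd rfl hfg
      · exact hdisj v hvf
      · intro hvg; exact hdisj v hvg hvf
      · exact absurd rfl hfg
    · intro f hf g hg hcfg
      have hf' : f = f1 ∨ f = f2 := by simpa using hf
      have hg' : g = f1 ∨ g = f2 := by simpa using hg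
      rcases hf' with rfl | rfl <;> rcases hg' with rfl | rfl
      · rfl
      · exact absurd hcfg hcol
      · exact absurd hcfg.symm hcol
      · rfl
    · intro f hf e he heS
      have heS' : e ≠ e₀ := by simpa using heS
      have hf' : f = f1 ∨ f = f2 := by simpa using hf
      rcases hf' with rfl | rfl
      · exact h1 e he heS'
      · exact h2 e he heS'
    · intro f hf e he heS
      have heS' : e ≠ e₀ := by simpa using heS
      have hf' : f = f1 ∨ f = f2 := by simpa using hf
      rcases hf' with rfl | rfl
      · exact h3 e he heS'
      · exact h4 e he heS'
  have hext3 : ∀ e₀ ∈ M, ∀ f₀ ∈ M, e₀ ≠ f₀ → ∀ f1 f2 f3 : Sym2 V,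
      f1 ∈ G.edgeSet → f2 ∈ G.edgeSet → f3 ∈ G.edgeSet →
      (∀ v : V, v ∈ f1 → v ∉ f2) → (∀ v : V, v ∈ f1 → v ∉ f3) →
      (∀ v : V, v ∈ f2 → v ∉ f3) →
      c f1 ≠ c f2 → c f1 ≠ c f3 → c f2 ≠ c f3 →
      (∀ e ∈ M, e ≠ e₀ → e ≠ f₀ → ∀ v : V, v ∈ f1 → v ∉ e) →
      (∀ e ∈ M, e ≠ e₀ → e ≠ f₀ → ∀ v : V, v ∈ f2 → v ∉ e) →
      (∀ e ∈ M, e ≠ e₀ → e ≠ f₀ → ∀ v : V, v ∈ f3 → v ∉ e) →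
      (∀ e ∈ M, e ≠ e₀ → e ≠ f₀ → c f1 ≠ c e) →
      (∀ e ∈ M, e ≠ e₀ → e ≠ f₀ → c f2 ≠ c e) →
      (∀ e ∈ M, e ≠ e₀ → e ≠ f₀ → c f3 ≠ c e) → False := by
    intro e₀ he₀ f₀ hf₀ hef f1 f2 f3 hE1 hE2 hE3 d12 d13 d23 c12 c13 c23
      hM1 hM2 hM3 hc1 hc2 hc3
    have h12 : f1 ≠ f2 := fun h => c12 (by rw [h])
    have h13 : f1 ≠ f3 := fun h => c13 (by rw [h])
    have h23 : f2 ≠ f3 := fun h => c23 (by rw [h])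
    refine hext {e₀, f₀} {f1, f2, f3} ?_ ?_ ?_ ?_ ?_ ?_ ?_
    · intro e he
      rcases Finset.mem_insert.1 he with rfl | he
      · exact he₀
      · rw [Finset.mem_singleton.1 he]; exact hf₀
    · rw [Finset.card_insert_of_notMem (by simp [h12, h13]),
        Finset.card_insert_of_notMem (by simp [h23]),
        Finset.card_insert_of_notMem (by simp [hef])]
      simp
    · intro f hf
      have hf' : f = f1 ∨ f = f2 ∨ f = f3 := by simpa using hf
      rcases hf' with rfl | rfl | rfl
      · exact hE1
      · exact hE2
      · exact hE3
    · intro f hf g hg hfg v hvf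
      have hf' : f = f1 ∨ f = f2 ∨ f = f3 := by simpa using hf
      have hg' : g = f1 ∨ g = f2 ∨ g = f3 := by simpa using hg
      rcases hf' with rfl | rfl | rfl <;> rcases hg' with rfl | rfl | rfl <;>
        first
          | exact absurd rfl hfg
          | exact d12 v hvf
          | exact d13 v hvf
          | exact d23 v hvf
          | exact fun hvg => d12 v hvg hvf
          | exact fun hvg => d13 v hvg hvf
          | exact fun hvg => d23 v hvg hvf
    · intro f hf g hg hcfg
      have hf' : f = f1 ∨ f = f2 ∨ f = f3 := by simpa using hf
      have hg' : g = f1 ∨ g = f2 ∨ g = f3 := by simpa using hg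
      rcases hf' with rfl | rfl | rfl <;> rcases hg' with rfl | rfl | rfl <;>
        first
          | rfl
          | exact absurd hcfg c12
          | exact absurd hcfg c13
          | exact absurd hcfg c23
          | exact absurd hcfg.symm c12
          | exact absurd hcfg.symm c13
          | exact absurd hcfg.symm c23
    · intro f hf e he heS
      have he1 : e ≠ e₀ := by rintro rfl; exact heS (by simp)
      have he2 : e ≠ f₀ := by rintro rfl; exact heS (by simp)
      have hf' : f = f1 ∨ f = f2 ∨ f = f3 := by simpa using hf
      rcases hf' with rfl | rfl | rfl
      · exact hM1 e he he1 he2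
      · exact hM2 e he he1 he2
      · exact hM3 e he he1 he2
    · intro f hf e he heS
      have he1 : e ≠ e₀ := by rintro rfl; exact heS (by simp)
      have he2 : e ≠ f₀ := by rintro rfl; exact heS (by simp)
      have hf' : f = f1 ∨ f = f2 ∨ f = f3 := by simpa using hf
      rcases hf' with rfl | rfl | rfl
      · exact hc1 e he he1 he2
      · exact hc2 e he he1 he2
      · exact hc3 e he he1 he2
  -- small helpers
  have hneUW : ∀ u x : V, u ∈ U → x ∉ U → u ≠ x := by
    rintro u x hu hx rfl; exact hx hu
  have hnmem : ∀ x y v : V, v ≠ x → v ≠ y → v ∉ s(x, y) := by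
    intro x y v h1 h2 hv
    rcases Sym2.mem_iff.1 hv with rfl | rfl
    · exact h1 rfl
    · exact h2 rfl
  -- L1 : edges inside W have colors in C
  have hL1 : ∀ x y : V, x ∉ U → y ∉ U → G.Adj x y → c s(x, y) ∈ C := by
    intro x y hx hy hadj
    by_contra hcC
    refine hext1 s(x, y) (G.mem_edgeSet.2 hadj) ?_ ?_
    · intro e he v hv
      rcases Sym2.mem_iff.1 hv with rfl | rfl
      · exact hnotU _ hx e he
      · exact hnotU _ hy e he
    · intro e he hq
      exact hcC ((hCmem _).2 ⟨e, he, hq.symm⟩)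
  -- L2 : a W-internal edge colored like e forces t (p e).1 ≤ 2
  have hL2 : ∀ e ∈ M, ∀ x y : V, x ∉ U → y ∉ U → G.Adj x y →
      c s(x, y) = c e → t (p e).1 ≤ 2 := by
    intro e he x y hx hy hadj hcxy
    by_contra hlt
    push_neg at hlt
    have hcard : ({x, y} : Finset V).card + (∅ : Finset α).card < t (p e).1 := by
      have : ({x, y} : Finset V).card ≤ 2 := by
        apply le_trans (Finset.card_insert_le _ _); simp
      simpa using by omega
    obtain ⟨z, hzNW, hzA, -⟩ := hpick (p e).1 {x, y} ∅ hcard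
    obtain ⟨hza, hzU, hzC⟩ := (hNWmem _ z).1 hzNW
    have hzx : z ≠ x := by rintro rfl; exact hzA (by simp)
    have hzy : z ≠ y := by rintro rfl; exact hzA (by simp)
    have haU := (hpU e he).1
    refine hext2 e he s((p e).1, z) s(x, y) (G.mem_edgeSet.2 hza)
      (G.mem_edgeSet.2 hadj) ?_ ?_ ?_ ?_ ?_ ?_
    · intro v hv
      rcases Sym2.mem_iff.1 hv with rfl | rfl
      · exact hnmem _ _ _ (hneUW _ _ haU hx) (hneUW _ _ haU hy)
      · exact hnmem _ _ _ hzx hzy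
    · intro hq; rw [hcxy] at hq; exact hzC ((hCmem _).2 ⟨e, he, hq.symm⟩)
    · intro e' he' hne v hv
      rcases Sym2.mem_iff.1 hv with rfl | rfl
      · exact hMdisj e he e' he' (Ne.symm hne) _ (hpmem e he).1
      · exact hnotU _ hzU e' he'
    · intro e' he' hne v hv
      rcases Sym2.mem_iff.1 hv with rfl | rfl
      · exact hnotU _ hx e' he'
      · exact hnotU _ hy e' he'
    · intro e' he' hne hq
      exact hzC ((hCmem _).2 ⟨e', he', hq.symm⟩)
    · intro e' he' hne hq
      rw [hcxy] at hq
      exact hne (hcinj e' he' e he hq.symm ▸ rfl) |>.elim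
  -- L3 : t (p e).1 ≥ 3 forces NW (p e).2 = ∅
  have hL3 : ∀ e ∈ M, 3 ≤ t (p e).1 → ∀ x : V, x ∉ NW (p e).2 := by
    intro e he h3 x hxNW
    obtain ⟨hbx, hxU, hxC⟩ := (hNWmem _ x).1 hxNW
    have hcard : ({x} : Finset V).card + ({c s((p e).2, x)} : Finset α).card
        < t (p e).1 := by simp; omega
    obtain ⟨z, hzNW, hzA, hzc⟩ := hpick (p e).1 {x} {c s((p e).2, x)} hcard
    obtain ⟨hza, hzU, hzC⟩ := (hNWmem _ z).1 hzNW
    have hzx : z ≠ x := by rintro rfl; exact hzA (by simp)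
    have haU := (hpU e he).1
    have hbU := (hpU e he).2
    refine hext2 e he s((p e).1, z) s((p e).2, x) (G.mem_edgeSet.2 hza)
      (G.mem_edgeSet.2 hbx) ?_ ?_ ?_ ?_ ?_ ?_
    · intro v hv
      rcases Sym2.mem_iff.1 hv with rfl | rfl
      · exact hnmem _ _ _ (hpne e he) (hneUW _ _ haU hxU)
      · exact hnmem _ _ _ (Ne.symm (hneUW _ _ hbU hzU)) hzx
    · intro hq; exact hzc (Finset.mem_singleton.2 hq)
    · intro e' he' hne v hv
      rcases Sym2.mem_iff.1 hv with rfl | rfl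
      · exact hMdisj e he e' he' (Ne.symm hne) _ (hpmem e he).1
      · exact hnotU _ hzU e' he'
    · intro e' he' hne v hv
      rcases Sym2.mem_iff.1 hv with rfl | rfl
      · exact hMdisj e he e' he' (Ne.symm hne) _ (hpmem e he).2
      · exact hnotU _ hxU e' he'
    · intro e' he' hne hq
      exact hzC ((hCmem _).2 ⟨e', he', hq.symm⟩)
    · intro e' he' hne hq
      exact hxC ((hCmem _).2 ⟨e', he', hq.symm⟩)
  -- L5 : for two distinct heavy edges, the light end of one sends no edge colored like the other
  have hL5 : ∀ e ∈ M, ∀ f ∈ M, e ≠ f → 5 ≤ t (p e).1 → 5 ≤ t (p f).1 →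
      ∀ x : V, x ∉ U → G.Adj (p e).2 x → c s((p e).2, x) ≠ c f := by
    intro e he f hf hef h5e h5f x hxU hbex hcc
    obtain ⟨y, hyNW, hyA, -⟩ := hpick (p f).1 {x} ∅ (by simp; omega)
    obtain ⟨hfy, hyU, hyC⟩ := (hNWmem _ y).1 hyNW
    have hyx : y ≠ x := by rintro rfl; exact hyA (by simp)
    have hcard : ({x, y} : Finset V).card + ({c s((p f).1, y)} : Finset α).card
        < t (p e).1 := by
      have : ({x, y} : Finset V).card ≤ 2 := by
        apply le_trans (Finset.card_insert_le _ _); simp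
      simp only [Finset.card_singleton]
      omega
    obtain ⟨z, hzNW, hzA, hzc⟩ := hpick (p e).1 {x, y} {c s((p f).1, y)} hcard
    obtain ⟨hez, hzU, hzC⟩ := (hNWmem _ z).1 hzNW
    have hzx : z ≠ x := by rintro rfl; exact hzA (by simp)
    have hzy : z ≠ y := by rintro rfl; exact hzA (by simp)
    have haeU := (hpU e he).1
    have hbeU := (hpU e he).2
    have hafU := (hpU f hf).1
    have hbeaf : (p e).2 ≠ (p f).1 := by
      intro hq
      exact hMdisj e he f hf hef _ (hpmem e he).2 (hq ▸ (hpmem f hf).1)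
    have haeaf : (p f).1 ≠ (p e).1 := by
      intro hq
      exact hMdisj f hf e he (Ne.symm hef) _ (hpmem f hf).1 (hq ▸ (hpmem e he).1)
    refine hext3 e he f hf hef s((p e).2, x) s((p f).1, y) s((p e).1, z)
      (G.mem_edgeSet.2 hbex) (G.mem_edgeSet.2 hfy) (G.mem_edgeSet.2 hez)
      ?_ ?_ ?_ ?_ ?_ ?_ ?_ ?_ ?_ ?_ ?_ ?_
    · intro v hv
      rcases Sym2.mem_iff.1 hv with rfl | rfl
      · exact hnmem _ _ _ hbeaf (hneUW _ _ hbeU hyU)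
      · exact hnmem _ _ _ (Ne.symm (hneUW _ _ hafU hxU)) (Ne.symm hyx)
    · intro v hv
      rcases Sym2.mem_iff.1 hv with rfl | rfl
      · exact hnmem _ _ _ (Ne.symm (hpne e he)) (hneUW _ _ hbeU hzU)
      · exact hnmem _ _ _ (Ne.symm (hneUW _ _ haeU hxU)) (Ne.symm hzx)
    · intro v hv
      rcases Sym2.mem_iff.1 hv with rfl | rfl
      · exact hnmem _ _ _ haeaf (hneUW _ _ hafU hzU)
      · exact hnmem _ _ _ (Ne.symm (hneUW _ _ haeU hyU)) (Ne.symm hzy)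
    · rw [hcc]; intro hq; exact hyC ((hCmem _).2 ⟨f, hf, hq⟩)
    · rw [hcc]; intro hq; exact hzC ((hCmem _).2 ⟨f, hf, hq⟩)
    · intro hq; exact hzc (Finset.mem_singleton.2 hq.symm)
    · intro e' he' hne1 hne2 v hv
      rcases Sym2.mem_iff.1 hv with rfl | rfl
      · exact hMdisj e he e' he' (Ne.symm hne1) _ (hpmem e he).2
      · exact hnotU _ hxU e' he'
    · intro e' he' hne1 hne2 v hv
      rcases Sym2.mem_iff.1 hv with rfl | rfl
      · exact hMdisj f hf e' he' (Ne.symm hne2) _ (hpmem f hf).1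
      · exact hnotU _ hyU e' he'
    · intro e' he' hne1 hne2 v hv
      rcases Sym2.mem_iff.1 hv with rfl | rfl
      · exact hMdisj e he e' he' (Ne.symm hne1) _ (hpmem e he).1
      · exact hnotU _ hzU e' he'
    · intro e' he' hne1 hne2 hq
      rw [hcc] at hq
      exact hne2 (hcinj e' he' f hf hq.symm ▸ rfl) |>.elim
    · intro e' he' hne1 hne2 hq
      exact hyC ((hCmem _).2 ⟨e', he', hq.symm⟩)
    · intro e' he' hne1 hne2 hq
      exact hzC ((hCmem _).2 ⟨e', he', hq.symm⟩)
  -- the counting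
  set W : Finset V := univ.filter (fun v => v ∉ U) with hW
  have hWmem : ∀ v : V, v ∈ W ↔ v ∉ U := by intro v; rw [hW]; simp
  set w0 := W.card with hw0
  set eU : V → ℕ := fun v => (U.filter (G.Adj v)).card with heU
  set eW : V → ℕ := fun v => (W.filter (G.Adj v)).card with heWdef
  have hdUW : Disjoint U W := by
    rw [Finset.disjoint_left]
    intro a ha hb
    exact (hWmem a).1 hb ha
  have hUWuniv : U ∪ W = univ := by
    ext v
    simp only [Finset.mem_union, hWmem, Finset.mem_univ, iff_true]
    exact em _
  -- color degree = number of neighbours, split into U and W parts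
  have hcd : ∀ v : V, colorDegree G c v = eU v + eW v := by
    intro v
    have hinj : Set.InjOn c (G.incidenceSet v) := by
      intro e he f hf hq
      by_contra hne
      exact hc e he.1 f hf.1 hne ⟨v, he.2, hf.2⟩ hq
    have h1 : colorDegree G c v = (G.incidenceSet v).ncard :=
      Set.ncard_image_of_injOn hinj
    have h2 : (G.incidenceSet v).ncard = G.degree v := by
      rw [← G.card_incidenceFinset_eq_degree v, ← Set.ncard_coe_finset]
      congr 1
      ext e
      simp [SimpleGraph.mem_incidenceFinset]
    have h3 : G.degree v = (univ.filter (G.Adj v)).card := by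
      rw [← SimpleGraph.card_neighborFinset_eq_degree]
      congr 1
      ext u
      simp
    have h4 : univ.filter (G.Adj v) = U.filter (G.Adj v) ∪ W.filter (G.Adj v) := by
      rw [← Finset.filter_union, hUWuniv]
    have h5 : Disjoint (U.filter (G.Adj v)) (W.filter (G.Adj v)) :=
      Finset.disjoint_filter_filter hdUW
    rw [h1, h2, h3, h4, Finset.card_union_of_disjoint h5]
  have htotal : totalColorDegree G c = ∑ u ∈ U, eU u + (∑ u ∈ U, eW u + (∑ v ∈ W, eU v + ∑ v ∈ W, eW v)) := by
    rw [totalColorDegree]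
    calc ∑ v : V, colorDegree G c v = ∑ v : V, (eU v + eW v) := by
          exact Finset.sum_congr rfl (fun v _ => hcd v)
      _ = ∑ v ∈ U ∪ W, (eU v + eW v) := by rw [hUWuniv]
      _ = ∑ v ∈ U, (eU v + eW v) + ∑ v ∈ W, (eU v + eW v) := Finset.sum_union hdUW
      _ = _ := by rw [Finset.sum_add_distrib, Finset.sum_add_distrib]; ring
  -- the bipartite double count
  have hflip : ∑ v ∈ W, eU v = ∑ u ∈ U, eW u := by
    rw [heU, heWdef]
    simp only [Finset.card_filter]
    rw [Finset.sum_comm]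
    apply Finset.sum_congr rfl
    intro u _
    apply Finset.sum_congr rfl
    intro v _
    congr 1
    simp only [eq_iff_iff]
    constructor
    · exact fun h => h.symm
    · exact fun h => h.symm
  have hUeq : U = M.biUnion (fun e => {(p e).1, (p e).2}) := by
    ext v
    rw [hUmem, Finset.mem_biUnion]
    constructor
    · rintro ⟨e, he, hv⟩
      refine ⟨e, he, ?_⟩
      rw [← hpmk e] at hv
      rcases Sym2.mem_iff.1 hv with rfl | rfl <;> simp
    · rintro ⟨e, he, hv⟩
      refine ⟨e, he, ?_⟩
      rcases Finset.mem_insert.1 hv with rfl | hv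
      · exact (hpmem e he).1
      · rw [Finset.mem_singleton.1 hv]; exact (hpmem e he).2
  have hPD : ∀ e ∈ M, ∀ f ∈ M, e ≠ f → Disjoint ({(p e).1, (p e).2} : Finset V) ({(p f).1, (p f).2} : Finset V) := by
    intro e he f hf hef
    rw [Finset.disjoint_left]
    intro v hv hv'
    have hve : v ∈ e := by
      rcases Finset.mem_insert.1 hv with rfl | hv
      · exact (hpmem e he).1
      · rw [Finset.mem_singleton.1 hv]; exact (hpmem e he).2
    have hvf : v ∈ f := by
      rcases Finset.mem_insert.1 hv' with rfl | hv'
      · exact (hpmem f hf).1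
      · rw [Finset.mem_singleton.1 hv']; exact (hpmem f hf).2
    exact hMdisj e he f hf hef v hve hvf
  have hUcard : U.card = 2 * k := by
    rw [hUeq, Finset.card_biUnion hPD]
    have hc2 : ∀ e ∈ M, ({(p e).1, (p e).2} : Finset V).card = 2 := by
      intro e he
      rw [Finset.card_insert_of_notMem (by simp [hpne e he]), Finset.card_singleton]
    rw [Finset.sum_congr rfl hc2, Finset.sum_const, smul_eq_mul, hk, Nat.mul_comm]
  have hUsum : ∀ F : V → ℕ, ∑ u ∈ U, F u = ∑ e ∈ M, (F (p e).1 + F (p e).2) := by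
    intro F
    rw [hUeq, Finset.sum_biUnion (fun x hx y hy hxy => hPD x (Finset.mem_coe.1 hx) y (Finset.mem_coe.1 hy) hxy)]
    apply Finset.sum_congr rfl
    intro e he
    rw [Finset.sum_pair (hpne e he)]
  -- heavy and light edges
  set H : Finset (Sym2 V) := M.filter (fun e => 5 ≤ t (p e).1) with hH
  set L : Finset (Sym2 V) := M.filter (fun e => ¬ 5 ≤ t (p e).1) with hL
  set h0 := H.card with hh0
  set l0 := L.card with hl0
  have hHL : h0 + l0 = k := by
    rw [hh0, hl0, hH, hL, hk]
    exact Finset.card_filter_add_card_filter_not _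
  have hLcol : (L.image c).card ≤ l0 := Finset.card_image_le
  have hCk : C.card ≤ k := by rw [hC, hk]; exact Finset.card_image_le
  -- bound (a) : heavy second endpoint has few W-neighbours
  have hba : ∀ e ∈ H, eW (p e).2 ≤ l0 := by
    intro e heH
    obtain ⟨he, h5⟩ := Finset.mem_filter.1 heH
    refine le_trans (Finset.card_le_card_of_injOn (fun x => c s((p e).2, x)) ?_ ?_) hLcol
    · intro x hx
      obtain ⟨hxW, hbx⟩ := Finset.mem_filter.1 hx
      have hxU : x ∉ U := (hWmem x).1 hxW
      have hCin : c s((p e).2, x) ∈ C := by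
        by_contra hnot
        exact hL3 e he (by omega) x ((hNWmem _ x).2 ⟨hbx, hxU, hnot⟩)
      obtain ⟨g, hg, hgc⟩ := (hCmem _).1 hCin
      have hge : g ≠ e := by
        rintro rfl
        have : c s((p g).2, x) ≠ c g := by
          have hadj_ba : G.Adj (p g).2 (p g).1 := (hpadj g hg).symm
          have := hproper (p g).2 x (p g).1 hbx hadj_ba
            (hneUW _ _ (hpU g hg).1 hxU).symm
          rw [Sym2.eq_swap (a := (p g).2) (b := (p g).1), hce g hg] at this
          exact this
        exact this hgc.symm
      have hglight : g ∈ L := by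
        rw [hL, Finset.mem_filter]
        refine ⟨hg, ?_⟩
        intro h5g
        exact hL5 e he g hg (Ne.symm hge) h5 h5g x hxU hbx hgc.symm
      exact Finset.mem_image.2 ⟨g, hglight, hgc⟩
    · intro x hx y hy hxy
      by_contra hne
      obtain ⟨_, hbx⟩ := Finset.mem_filter.1 hx
      obtain ⟨_, hby⟩ := Finset.mem_filter.1 hy
      exact hproper (p e).2 x y hbx hby hne hxy
  -- bound (b) : light endpoints have at most k + 4 W-neighbours
  have hbb : ∀ u : V, t u ≤ 4 → eW u ≤ k + 4 := by
    intro u htu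
    have hsplit := Finset.card_filter_add_card_filter_not
      (s := W.filter (G.Adj u)) (p := fun x => c s(u, x) ∈ C)
    have h1 : ((W.filter (G.Adj u)).filter (fun x => c s(u, x) ∈ C)).card ≤ k := by
      refine le_trans (le_trans (Finset.card_le_card_of_injOn (fun x => c s(u, x)) ?_ ?_) le_rfl) hCk
      · intro x hx
        exact (Finset.mem_filter.1 hx).2
      · intro x hx y hy hxy
        by_contra hne
        obtain ⟨hx', _⟩ := Finset.mem_filter.1 hx
        obtain ⟨hy', _⟩ := Finset.mem_filter.1 hy
        exact hproper u x y (Finset.mem_filter.1 hx').2 (Finset.mem_filter.1 hy').2 hne hxy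
    have h2 : ((W.filter (G.Adj u)).filter (fun x => ¬ c s(u, x) ∈ C)).card ≤ t u := by
      rw [ht]
      apply Finset.card_le_card
      intro x hx
      obtain ⟨hx', hxc⟩ := Finset.mem_filter.1 hx
      obtain ⟨hxW, hux⟩ := Finset.mem_filter.1 hx'
      exact Finset.mem_filter.2 ⟨Finset.mem_univ x, hux, (hWmem x).1 hxW, hxc⟩
    rw [heWdef]
    simp only
    omega
  -- bound (c) : vertices of W have at most l0 W-neighbours
  have hbc : ∀ v ∈ W, eW v ≤ l0 := by
    intro v hvW
    have hvU : v ∉ U := (hWmem v).1 hvW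
    refine le_trans (Finset.card_le_card_of_injOn (fun x => c s(v, x)) ?_ ?_) hLcol
    · intro x hx
      obtain ⟨hxW, hvx⟩ := Finset.mem_filter.1 hx
      have hxU : x ∉ U := (hWmem x).1 hxW
      have hCin : c s(v, x) ∈ C := hL1 v x hvU hxU hvx
      obtain ⟨g, hg, hgc⟩ := (hCmem _).1 hCin
      have hglight : g ∈ L := by
        rw [hL, Finset.mem_filter]
        refine ⟨hg, ?_⟩
        intro h5g
        have := hL2 g hg v x hvU hxU hvx hgc.symm
        omega
      exact Finset.mem_image.2 ⟨g, hglight, hgc⟩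
    · intro x hx y hy hxy
      by_contra hne
      obtain ⟨_, hvx⟩ := Finset.mem_filter.1 hx
      obtain ⟨_, hvy⟩ := Finset.mem_filter.1 hy
      exact hproper v x y hvx hvy hne hxy
  -- assemble the sums
  have hsumU_eU : ∑ u ∈ U, eU u ≤ 2 * k * (2 * k) := by
    calc ∑ u ∈ U, eU u ≤ ∑ _u ∈ U, 2 * k := by
          apply Finset.sum_le_sum
          intro u _
          rw [heU]
          calc (U.filter (G.Adj u)).card ≤ U.card := Finset.card_filter_le _ _
            _ = 2 * k := hUcard
      _ = 2 * k * (2 * k) := by rw [Finset.sum_const, smul_eq_mul, hUcard]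
  have hsumU_eW : ∑ u ∈ U, eW u ≤ h0 * (w0 + l0) + l0 * (2 * k + 8) := by
    rw [hUsum eW]
    have hsplit : ∑ e ∈ M, (eW (p e).1 + eW (p e).2)
        = ∑ e ∈ H, (eW (p e).1 + eW (p e).2) + ∑ e ∈ L, (eW (p e).1 + eW (p e).2) := by
      rw [hH, hL]
      exact (Finset.sum_filter_add_sum_filter_not M _ _).symm
    rw [hsplit]
    have hHbound : ∑ e ∈ H, (eW (p e).1 + eW (p e).2) ≤ h0 * (w0 + l0) := by
      calc ∑ e ∈ H, (eW (p e).1 + eW (p e).2) ≤ ∑ _e ∈ H, (w0 + l0) := by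
            apply Finset.sum_le_sum
            intro e heH
            have h1 : eW (p e).1 ≤ w0 := by
              rw [heWdef, hw0]; exact Finset.card_filter_le _ _
            exact Nat.add_le_add h1 (hba e heH)
        _ = h0 * (w0 + l0) := by rw [Finset.sum_const, smul_eq_mul, hh0]
    have hLbound : ∑ e ∈ L, (eW (p e).1 + eW (p e).2) ≤ l0 * (2 * k + 8) := by
      calc ∑ e ∈ L, (eW (p e).1 + eW (p e).2) ≤ ∑ _e ∈ L, ((k + 4) + (k + 4)) := by
            apply Finset.sum_le_sum
            intro e heL
            obtain ⟨heM, h5⟩ := Finset.mem_filter.1 heL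
            have ht1 : t (p e).1 ≤ 4 := by omega
            have ht2 : t (p e).2 ≤ 4 := le_trans (hpt e) ht1
            exact Nat.add_le_add (hbb _ ht1) (hbb _ ht2)
        _ = l0 * (2 * k + 8) := by rw [Finset.sum_const, smul_eq_mul, hl0]; ring
    exact Nat.add_le_add hHbound hLbound
  have hsumW_eW : ∑ v ∈ W, eW v ≤ w0 * l0 := by
    calc ∑ v ∈ W, eW v ≤ ∑ _v ∈ W, l0 := Finset.sum_le_sum (fun v hv => hbc v hv)
      _ = w0 * l0 := by rw [Finset.sum_const, smul_eq_mul, hw0]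
  have hncard : n = 2 * k + w0 := by
    have := Finset.card_union_of_disjoint hdUW
    rw [hUWuniv, Finset.card_univ, hUcard] at this
    rw [hn, this, hw0]
  have hw6 : 6 * k + 8 ≤ w0 := by omega
  have htot_le : totalColorDegree G c
      ≤ 2 * k * (2 * k) + 2 * (h0 * (w0 + l0) + l0 * (2 * k + 8)) + w0 * l0 := by
    rw [htotal, hflip]
    omega
  have harith : 2 * k * (2 * k) + 2 * (h0 * (w0 + l0) + l0 * (2 * k + 8)) + w0 * l0
      < 2 * (k + 1) * n := by
    rw [hncard]
    have e1 : l0 * (6 * k + 8) ≤ l0 * w0 := Nat.mul_le_mul_left l0 hw6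
    nlinarith [e1, hHL, sq_nonneg (h0 + l0)]
  exact lt_of_le_of_lt htot_le harith

/-- If `G` is a graph on `n ≥ 8 * m` vertices and `c` is a proper edge coloring of `G`
with total color degree at least `2 * m * n`, then `G` contains a rainbow matching of
size `m`. -/
theorem proper_rainbow_matching [Fintype V] (G : SimpleGraph V)
    (c : Sym2 V → α) (hc : IsProperEdgeColoring G c) (m : ℕ)
    (hn : 8 * m ≤ Fintype.card V)
    (h : 2 * m * Fintype.card V ≤ totalColorDegree G c) :
    ∃ M : Finset (Sym2 V), IsRainbowMatching G c M ∧ M.card = m := by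
  classical
  have hempty : IsRainbowMatching G c (∅ : Finset (Sym2 V)) := by
    refine ⟨by simp, by simp, by simp⟩
  obtain ⟨M, hMmem, hMmax⟩ := Finset.exists_max_image
    ((Finset.univ : Finset (Finset (Sym2 V))).filter (fun N => IsRainbowMatching G c N))
    Finset.card ⟨∅, by simp [hempty]⟩
  have hM : IsRainbowMatching G c M := (Finset.mem_filter.1 hMmem).2
  have hMmax' : ∀ N : Finset (Sym2 V), IsRainbowMatching G c N → N.card ≤ M.card := by
    intro N hN
    exact hMmax N (Finset.mem_filter.2 ⟨Finset.mem_univ N, hN⟩)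
  by_cases hcase : m ≤ M.card
  · obtain ⟨N, hNsub, hNcard⟩ := Finset.exists_subset_card_eq hcase
    exact ⟨N, rainbow_subset hM hNsub, hNcard⟩
  · exfalso
    push_neg at hcase
    have h8 : 8 * (M.card + 1) ≤ Fintype.card V := by
      calc 8 * (M.card + 1) ≤ 8 * m := by omega
        _ ≤ Fintype.card V := hn
    have hlt := main_bound G c hc M hM hMmax' h8
    have h2 : 2 * (M.card + 1) * Fintype.card V ≤ 2 * m * Fintype.card V := by
      apply Nat.mul_le_mul_right
      omega
    omega
end

section
/- Let G be a simple graph on n vertices containing no cycle of length 4, with an edge coloring c. If uv is an edge of G, then the sum of the color degrees of u and v is at most n + 1. -/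
variable {V : Type*} {α : Type*}

/-- `G` contains no cycle of length 4 (no `C₄` subgraph). -/
def C4Free (G : SimpleGraph V) : Prop :=
  ∀ a b x y : V, a ≠ x → b ≠ y →
    ¬(G.Adj a b ∧ G.Adj b x ∧ G.Adj x y ∧ G.Adj y a)


/-- In a `C₄`-free graph on `n` vertices with edge coloring `c`, the endpoints of any
edge have color degrees summing to at most `n + 1`. -/
theorem c4_free_colorDegree_add_le [Fintype V] (G : SimpleGraph V)
    (hG : C4Free G) (c : Sym2 V → α) (u v : V) (huv : G.Adj u v) :
    colorDegree G c u + colorDegree G c v ≤ Fintype.card V + 1 := by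
  classical
  have h1 : ∀ w : V, colorDegree G c w ≤ (G.neighborSet w).ncard := by
    intro w
    calc colorDegree G c w ≤ (G.incidenceSet w).ncard :=
          Set.ncard_image_le (Set.toFinite _)
    _ = (G.neighborSet w).ncard := by
        rw [← Nat.card_coe_set_eq, ← Nat.card_coe_set_eq]
        exact Nat.card_congr (G.incidenceSetEquivNeighborSet w)
  have hinter : (G.neighborSet u ∩ G.neighborSet v).ncard ≤ 1 := by
    rw [Set.ncard_le_one_iff_eq]
    by_contra h
    push_neg at h
    obtain ⟨hne, h2⟩ := h
    obtain ⟨w, hw⟩ := hne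
    have h3 : ¬ (G.neighborSet u ∩ G.neighborSet v) ⊆ {w} := by
      intro hsub
      exact h2 w (Set.eq_singleton_iff_nonempty_unique_mem.mpr ⟨⟨w, hw⟩,
        fun x hx => hsub hx⟩)
    obtain ⟨x, hx, hxw⟩ := Set.not_subset.mp h3
    simp only [Set.mem_singleton_iff] at hxw
    obtain ⟨hwu, hwv⟩ := hw
    obtain ⟨hxu, hxv⟩ := hx
    exact hG u w v x huv.ne (Ne.symm hxw) ⟨hwu, hwv.symm, hxv, hxu.symm⟩
  have hunion : (G.neighborSet u ∪ G.neighborSet v).ncard ≤ Fintype.card V := by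
    calc (G.neighborSet u ∪ G.neighborSet v).ncard
        ≤ (Set.univ : Set V).ncard := Set.ncard_le_ncard (Set.subset_univ _) (Set.toFinite _)
    _ = Fintype.card V := by rw [Set.ncard_univ, Nat.card_eq_fintype_card]
  have key : (G.neighborSet u).ncard + (G.neighborSet v).ncard
      = (G.neighborSet u ∪ G.neighborSet v).ncard
        + (G.neighborSet u ∩ G.neighborSet v).ncard :=
    (Set.ncard_union_add_ncard_inter _ _ (Set.toFinite _) (Set.toFinite _)).symm
  have := h1 u
  have := h1 v
  omega
end

section
/- Let G be a simple graph containing no cycle of length 4, let uv be an edge of G, and let S be a set of s vertices of G disjoint from {u,v}. Then the number of edges of G with one endpoint in S and the other endpoint in {u,v} is at most s + 1. -/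
variable {V : Type*}

/-- In a `C₄`-free graph, if `uv` is an edge and `S` is a set of `s` vertices disjoint
from `{u, v}`, then there are at most `s + 1` edges with one endpoint in `S` and the
other in `{u, v}`. -/
theorem c4_free_edges_between_edge_and_set [Fintype V] (G : SimpleGraph V)
    (hG : C4Free G) (u v : V) (huv : G.Adj u v) (S : Finset V) (s : ℕ)
    (hS : S.card = s) (huS : u ∉ S) (hvS : v ∉ S) :
    {e ∈ G.edgeSet | ∃ a ∈ S, ∃ b : V, (b = u ∨ b = v) ∧ e = s(a, b)}.ncard ≤ s + 1 := by
  classical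
  set Au : Finset V := S.filter (fun a => G.Adj a u) with hAu
  set Av : Finset V := S.filter (fun a => G.Adj a v) with hAv
  set T : Finset (Sym2 V) :=
    Au.image (fun a => s(a, u)) ∪ Av.image (fun a => s(a, v)) with hT
  have hsub : {e ∈ G.edgeSet | ∃ a ∈ S, ∃ b : V, (b = u ∨ b = v) ∧ e = s(a, b)} ⊆ ↑T := by
    rintro e ⟨he, a, haS, b, hb | hb, rfl⟩
    · subst hb
      simp only [hT, Finset.coe_union, Set.mem_union, Finset.coe_image, Set.mem_image,
        Finset.mem_coe, hAu, hAv, Finset.mem_filter]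
      exact Or.inl ⟨a, ⟨haS, (SimpleGraph.mem_edgeSet G).mp he⟩, rfl⟩
    · subst hb
      simp only [hT, Finset.coe_union, Set.mem_union, Finset.coe_image, Set.mem_image,
        Finset.mem_coe, hAu, hAv, Finset.mem_filter]
      exact Or.inr ⟨a, ⟨haS, (SimpleGraph.mem_edgeSet G).mp he⟩, rfl⟩
  have h1 : {e ∈ G.edgeSet | ∃ a ∈ S, ∃ b : V, (b = u ∨ b = v) ∧ e = s(a, b)}.ncard
      ≤ T.card := by
    calc _ ≤ (↑T : Set (Sym2 V)).ncard := Set.ncard_le_ncard hsub T.finite_toSet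
    _ = T.card := Set.ncard_coe_finset T
  have h2 : T.card ≤ Au.card + Av.card :=
    le_trans (Finset.card_union_le _ _)
      (add_le_add (Finset.card_image_le) (Finset.card_image_le))
  have h3 : (Au ∪ Av).card ≤ s := by
    rw [← hS]
    apply Finset.card_le_card
    intro a ha
    rcases Finset.mem_union.mp ha with h | h <;>
      exact (Finset.mem_filter.mp h).1
  have h4 : (Au ∩ Av).card ≤ 1 := by
    apply Finset.card_le_one.mpr
    intro a ha b hb
    simp only [hAu, hAv, Finset.mem_inter, Finset.mem_filter] at ha hb
    by_contra hab
    exact hG a u b v hab huv.ne ⟨ha.1.2, (hb.1.2).symm, hb.2.2, (ha.2.2).symm⟩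
  have h5 : Au.card + Av.card = (Au ∪ Av).card + (Au ∩ Av).card :=
    (Finset.card_union_add_card_inter Au Av).symm
  omega
end

section
/- Let G be a simple graph with a proper edge coloring c, let M be a rainbow matching in G of size s, and let v be a vertex of G not covered by M whose color degree is at least 3s + 1. Then there exists a vertex u adjacent to v such that u is not covered by M and the color c(uv) does not appear on any edge of M; in particular, M together with the edge uv is a rainbow matching of size s + 1. -/
variable {V : Type*} {α : Type*}

/-- If `c` is a proper edge coloring, `M` a rainbow matching of size `s`, and `v` an
uncovered vertex of color degree at least `3 * s + 1`, then some neighbor `u` of `v` is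
uncovered by `M` with `c(uv)` not appearing on `M`, and `M ∪ {uv}` is a rainbow matching
of size `s + 1`. -/
theorem proper_extend_at_high_colorDegree_vertex [Fintype V] [DecidableEq V] (G : SimpleGraph V)
    (c : Sym2 V → α) (hc : IsProperEdgeColoring G c)
    (M : Finset (Sym2 V)) (s : ℕ) (hM : IsRainbowMatching G c M) (hcard : M.card = s)
    (v : V) (hv : ∀ e ∈ M, v ∉ e) (hdeg : 3 * s + 1 ≤ colorDegree G c v) :
    ∃ u : V, G.Adj u v ∧ (∀ e ∈ M, u ∉ e) ∧ (∀ e ∈ M, c e ≠ c s(u, v)) ∧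
      IsRainbowMatching G c (insert s(u, v) M) ∧ (insert s(u, v) M).card = s + 1 := by
  classical
  obtain ⟨hMe, hMd, hMc⟩ := hM
  set NF : Finset V := Finset.univ.filter (fun u => G.Adj v u) with hNFdef
  have hmemNF : ∀ u : V, u ∈ NF ↔ G.Adj v u := by
    intro u; simp [hNFdef]
  -- colorDegree ≤ card NF
  have hNFcard : 3 * s + 1 ≤ NF.card := by
    have hsub : c '' G.incidenceSet v ⊆ (fun u => c s(v, u)) '' (↑NF : Set V) := by
      rintro x ⟨e, ⟨heE, hve⟩, rfl⟩
      induction e using Sym2.ind with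
      | _ a b =>
        rcases Sym2.mem_iff.mp hve with rfl | rfl
        · exact ⟨b, by simpa [hmemNF] using ((SimpleGraph.mem_edgeSet G).mp heE), rfl⟩
        · refine ⟨a, by simpa [hmemNF] using ((SimpleGraph.mem_edgeSet G).mp heE).symm, ?_⟩
          simp [Sym2.eq_swap]
    have h1 : colorDegree G c v ≤ ((fun u => c s(v, u)) '' (↑NF : Set V)).ncard :=
      Set.ncard_le_ncard hsub (Set.toFinite _)
    have h2 : ((fun u => c s(v, u)) '' (↑NF : Set V)).ncard ≤ (↑NF : Set V).ncard :=
      Set.ncard_image_le (Set.toFinite _)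
    have h3 : (↑NF : Set V).ncard = NF.card := Set.ncard_coe_finset _
    omega
  set B1 : Finset V := NF.filter (fun u => ∃ e ∈ M, u ∈ e) with hB1def
  set B2 : Finset V := NF.filter (fun u => ∃ e ∈ M, c e = c s(u, v)) with hB2def
  have hB1 : B1.card ≤ 2 * s := by
    have hsub : B1 ⊆ M.biUnion (fun e => Finset.univ.filter (· ∈ e)) := by
      intro u hu
      rw [hB1def, Finset.mem_filter] at hu
      obtain ⟨-, e, he, hue⟩ := hu
      exact Finset.mem_biUnion.mpr ⟨e, he, by simp [hue]⟩
    calc B1.card ≤ (M.biUnion (fun e => Finset.univ.filter (· ∈ e))).card :=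
          Finset.card_le_card hsub
      _ ≤ ∑ e ∈ M, (Finset.univ.filter (· ∈ e)).card := Finset.card_biUnion_le
      _ ≤ ∑ _e ∈ M, 2 := by
          refine Finset.sum_le_sum fun e _ => ?_
          induction e using Sym2.ind with
          | _ a b =>
            have : (Finset.univ.filter (· ∈ s(a, b))) ⊆ {a, b} := by
              intro x hx
              simp only [Finset.mem_filter, Sym2.mem_iff] at hx
              simpa using hx.2
            refine le_trans (Finset.card_le_card this) ?_
            exact le_trans (Finset.card_insert_le _ _) (by simp)
      _ = 2 * s := by simp [hcard, mul_comm]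
  have hB2 : B2.card ≤ s := by
    rw [← hcard]
    have hex : ∀ u ∈ B2, ∃ e ∈ M, c e = c s(u, v) := fun u hu => (Finset.mem_filter.mp hu).2
    choose f hf1 hf2 using hex
    have hNFmem : ∀ u ∈ B2, G.Adj v u := fun u hu =>
      (hmemNF u).mp (Finset.mem_filter.mp hu).1
    have : B2.attach.card ≤ M.card := by
      apply Finset.card_le_card_of_injOn (fun x => f x.1 x.2)
      · intro x _; exact hf1 x.1 x.2
      · intro a _ b _ hab
        have hca : c (f a.1 a.2) = c s(a.1, v) := hf2 a.1 a.2
        have hcb : c (f b.1 b.2) = c s(b.1, v) := hf2 b.1 b.2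
        have hab' : f a.1 a.2 = f b.1 b.2 := hab
        rw [hab'] at hca
        have hcc : c s(a.1, v) = c s(b.1, v) := hca.symm.trans hcb
        have haE : s(a.1, v) ∈ G.edgeSet := (SimpleGraph.mem_edgeSet G).mpr (hNFmem a.1 a.2).symm
        have hbE : s(b.1, v) ∈ G.edgeSet := (SimpleGraph.mem_edgeSet G).mpr (hNFmem b.1 b.2).symm
        have heq : s(a.1, v) = s(b.1, v) := by
          by_contra hne
          exact hc _ haE _ hbE hne ⟨v, by simp, by simp⟩ hcc
        have : a.1 = b.1 := by
          rcases Sym2.eq_iff.mp heq with ⟨h1, _⟩ | ⟨h1, h2⟩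
          · exact h1
          · exact h1.trans h2
        exact Subtype.ext this
    simpa using this
  -- find a good vertex
  have hcardU : (B1 ∪ B2).card ≤ 3 * s := le_trans (Finset.card_union_le _ _) (by omega)
  have hne : (NF \ (B1 ∪ B2)).Nonempty := by
    rw [← Finset.card_pos]
    have h := Finset.le_card_sdiff (B1 ∪ B2) NF
    omega
  obtain ⟨u, hu⟩ := hne
  rw [Finset.mem_sdiff, Finset.mem_union] at hu
  obtain ⟨huNF, huB⟩ := hu
  have hadj : G.Adj u v := ((hmemNF u).mp huNF).symm
  have hcov : ∀ e ∈ M, u ∉ e := by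
    intro e he hue
    exact huB (Or.inl (Finset.mem_filter.mpr ⟨huNF, e, he, hue⟩))
  have hcol : ∀ e ∈ M, c e ≠ c s(u, v) := by
    intro e he hce
    exact huB (Or.inr (Finset.mem_filter.mpr ⟨huNF, e, he, hce⟩))
  have hnotM : s(u, v) ∉ M := fun h => hcov _ h (by simp)
  have hmem_uv : ∀ w : V, w ∈ s(u, v) → w = u ∨ w = v := fun w hw => Sym2.mem_iff.mp hw
  refine ⟨u, hadj, hcov, hcol, ⟨?_, ?_, ?_⟩, by rw [Finset.card_insert_of_notMem hnotM, hcard]⟩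
  · intro e he
    rcases Finset.mem_insert.mp he with rfl | he
    · exact (SimpleGraph.mem_edgeSet G).mpr hadj
    · exact hMe he
  · intro e he f hf hef w hwe hwf
    rcases Finset.mem_insert.mp he with he1 | he1 <;>
      rcases Finset.mem_insert.mp hf with hf1 | hf1
    · exact hef (he1.trans hf1.symm)
    · rw [he1] at hwe
      rcases hmem_uv w hwe with rfl | rfl
      · exact hcov f hf1 hwf
      · exact hv f hf1 hwf
    · rw [hf1] at hwf
      rcases hmem_uv w hwf with rfl | rfl
      · exact hcov e he1 hwe
      · exact hv e he1 hwe
    · exact hMd e he1 f hf1 hef w hwe hwf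
  · intro e he f hf hcef
    rcases Finset.mem_insert.mp he with he1 | he1 <;>
      rcases Finset.mem_insert.mp hf with hf1 | hf1
    · exact he1.trans hf1.symm
    · rw [he1] at hcef
      exact absurd hcef.symm (hcol f hf1)
    · rw [hf1] at hcef
      exact absurd hcef (hcol e he1)
    · exact hMc e he1 f hf1 hcef
end

section
/- Let G be a simple graph with an edge coloring c, and suppose that for some color R there exist three edges of color R that form either a path on four vertices (three edges ab, bc, cd with a, b, c, d pairwise distinct) or a triangle (three edges ab, bc, ca with a, b, c pairwise distinct). Then there exists an edge e of G with c(e) = R such that the total color degree of the graph G with e deleted (under the restriction of c) equals the total color degree of G. -/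
variable {V : Type*} {α : Type*}

lemma incSet_del (G : SimpleGraph V) (e : Sym2 V) (w : V) :
    (G.deleteEdges {e}).incidenceSet w = G.incidenceSet w \ {e} := by
  ext f
  simp only [SimpleGraph.incidenceSet, Set.mem_sep_iff, Set.mem_diff, Set.mem_setOf_eq,
    SimpleGraph.edgeSet_deleteEdges, Set.mem_singleton_iff]
  tauto

lemma del_total_eq [Fintype V] (G : SimpleGraph V) (col : Sym2 V → α) (u v : V)
    (fu fv : Sym2 V) (hfu : fu ∈ G.incidenceSet u) (hfv : fv ∈ G.incidenceSet v)
    (hneu : fu ≠ s(u, v)) (hnev : fv ≠ s(u, v))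
    (hcu : col fu = col s(u, v)) (hcv : col fv = col s(u, v)) :
    totalColorDegree (G.deleteEdges {s(u, v)}) col = totalColorDegree G col := by
  unfold totalColorDegree colorDegree
  refine Finset.sum_congr rfl fun w _ => ?_
  congr 1
  rw [incSet_del]
  apply Set.Subset.antisymm
  · exact Set.image_mono Set.diff_subset
  · rintro cc ⟨g, hg, rfl⟩
    by_cases hge : g = s(u, v)
    · subst hge
      have hw : w ∈ s(u, v) := hg.2
      rcases Sym2.mem_iff.mp hw with rfl | rfl
      · exact ⟨fu, ⟨hfu, hneu⟩, hcu⟩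
      · exact ⟨fv, ⟨hfv, hnev⟩, hcv⟩
    · exact ⟨g, ⟨hg, hge⟩, rfl⟩

/-- If some color class contains three edges forming a path on four vertices or a
triangle, then some edge of that color can be deleted without changing the total color
degree of the graph. -/
theorem exists_removable_edge_of_P4_or_triangle [Fintype V] (G : SimpleGraph V)
    (col : Sym2 V → α) (R : α)
    (h : (∃ a b x y : V, a ≠ b ∧ a ≠ x ∧ a ≠ y ∧ b ≠ x ∧ b ≠ y ∧ x ≠ y ∧
            G.Adj a b ∧ G.Adj b x ∧ G.Adj x y ∧
            col s(a, b) = R ∧ col s(b, x) = R ∧ col s(x, y) = R) ∨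
         (∃ a b x : V, a ≠ b ∧ a ≠ x ∧ b ≠ x ∧
            G.Adj a b ∧ G.Adj b x ∧ G.Adj x a ∧
            col s(a, b) = R ∧ col s(b, x) = R ∧ col s(x, a) = R)) :
    ∃ e ∈ G.edgeSet, col e = R ∧
      totalColorDegree (G.deleteEdges {e}) col = totalColorDegree G col := by
  rcases h with ⟨a, b, x, y, hab, hax, hay, hbx, hby, hxy, Hab, Hbx, Hxy, cab, cbx, cxy⟩ |
      ⟨a, b, x, hab, hax, hbx, Hab, Hbx, Hxa, cab, cbx, cxa⟩
  · refine ⟨s(b, x), Hbx, cbx, ?_⟩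
    apply del_total_eq G col b x s(a, b) s(x, y)
    · exact ⟨Hab, Sym2.mem_mk_right a b⟩
    · exact ⟨Hxy, Sym2.mem_mk_left x y⟩
    · intro h; rw [Sym2.eq_iff] at h; tauto
    · intro h; rw [Sym2.eq_iff] at h; tauto
    · rw [cab, cbx]
    · rw [cxy, cbx]
  · refine ⟨s(a, b), Hab, cab, ?_⟩
    apply del_total_eq G col a b s(x, a) s(b, x)
    · exact ⟨Hxa, Sym2.mem_mk_right x a⟩
    · exact ⟨Hbx, Sym2.mem_mk_left b x⟩
    · intro h; rw [Sym2.eq_iff] at h; tauto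
    · intro h; rw [Sym2.eq_iff] at h; tauto
    · rw [cxa, cab]
    · rw [cbx, cab]
end
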